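/- arXiv:1611.05642 — 6 statements merged into one kernel-verified Lean document; each statement's English description precedes it below -/
import Mathlib

section
/- If m is a best monolithic minimiser for p : I → O, then for any hidden-use function h : I → O' the attacker computation composed with the minimiser is knowledge equivalent to the legitimate program: ⟨p,h⟩ ∘ m ≡ p. -/
/-- The knowledge about `u` obtained through `f`. -/
def Know {I O : Type*} (f : I → O) (u : I) : Set I := {v | f v = f u}

/-- The disclosure ordering: `f` discloses less or as much information as `g`. -/
def Discloses {I O O' : Type*} (f : I → O) (g : I → O') : Prop :=
  ∀ u : I, Know g u ⊆ Know f u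

/-- Knowledge equivalence: `f ≡ g`. -/
def KnowEquiv {I O O' : Type*} (f : I → O) (g : I → O') : Prop :=
  Discloses f g ∧ Discloses g f

/-- The attacker pairing `⟨f,g⟩(i) = (f i, g i)`. -/
def Pairing {I O O' : Type*} (f : I → O) (g : I → O') : I → O × O' :=
  fun i => (f i, g i)

/-- `m` is a monolithic minimiser for `p`: `p ∘ m = p` and `m ∘ m = m`. -/
def IsMinimiser {I O : Type*} (p : I → O) (m : I → I) : Prop :=
  p ∘ m = p ∧ m ∘ m = m

/-- `m` is a best monolithic minimiser for `p`. -/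
def IsBestMinimiser {I O : Type*} (p : I → O) (m : I → I) : Prop :=
  IsMinimiser p m ∧ ∀ n : I → I, IsMinimiser p n → Discloses m n

/-- if `m` is a best monolithic minimiser for `p` then for any hidden
use `h`, `⟨p,h⟩ ∘ m ≡ p`. -/
theorem attack_comp_best_minimiser_equiv {I O O' : Type*} (p : I → O) (m : I → I)
    (hbest : IsBestMinimiser p m) (h : I → O') :
    KnowEquiv (Pairing p h ∘ m) p := by
  classical
  obtain ⟨⟨hpm, hmm⟩, hb⟩ := hbest
  have hpm' : ∀ x, p (m x) = p x := fun x => congrFun hpm x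
  have hmm' : ∀ x, m (m x) = m x := fun x => congrFun hmm x
  -- key: m is constant on p-fibers
  have key : ∀ u v : I, p v = p u → m v = m u := by
    intro u v hpv
    set n : I → I := fun x => if p x = p u then m u else m x with hn
    have hnmin : IsMinimiser p n := by
      constructor
      · funext x
        simp only [Function.comp_apply, hn]
        split_ifs with hx
        · rw [hpm' u, hx]
        · exact hpm' x
      · funext x
        simp only [Function.comp_apply, hn]
        split_ifs with h1 h2 h3 <;> simp_all [hpm', hmm']
    have hd := hb n hnmin u
    have hv : v ∈ Know n u := by
      simp [Know, hn, hpv]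
    exact hd hv
  constructor
  · intro u v hv
    simp only [Know, Set.mem_setOf_eq] at hv ⊢
    simp only [Function.comp_apply, Pairing, key u v hv]
  · intro u v hv
    simp only [Know, Set.mem_setOf_eq, Function.comp_apply, Pairing, Prod.mk.injEq] at hv
    simp only [Know, Set.mem_setOf_eq]
    rw [← hpm' v, ← hpm' u, hv.1]
end

section
/- For every program p : I → O there exists a best monolithic minimiser, i.e., a monolithic minimiser m for p such that m ⊑ n for every monolithic minimiser n for p. -/
/-- every program `p` has a best monolithic minimiser. -/
theorem exists_best_monolithic_minimiser {I O : Type*} (p : I → O) :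
    ∃ m : I → I, IsMinimiser p m ∧
      ∀ n : I → I, IsMinimiser p n → Discloses m n := by
  classical
  rcases isEmpty_or_nonempty I with hI | hI
  · exact ⟨id, ⟨rfl, rfl⟩, fun n _ u => hI.elim u⟩
  · refine ⟨fun u => Function.invFun p (p u), ⟨?_, ?_⟩, ?_⟩
    · funext u
      exact Function.invFun_eq ⟨u, rfl⟩
    · funext u
      simp only [Function.comp_apply]
      rw [Function.invFun_eq (⟨u, rfl⟩ : ∃ v, p v = p u)]
    · intro n ⟨hpn, _⟩ u v hv
      have h1 : p v = p u := by
        have := congrFun hpn v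
        have := congrFun hpn u
        simp only [Function.comp_apply] at *
        calc p v = p (n v) := (congrFun hpn v).symm
          _ = p (n u) := by rw [hv]
          _ = p u := congrFun hpn u
      show Function.invFun p (p v) = Function.invFun p (p u)
      rw [h1]
end

section
/- For every distributed program dp : (∏ i ∈ {0,…,n} I_i) → O there exists a best distributed minimiser, i.e., a distributed minimiser dm for dp such that dm ⊑ dn for every distributed minimiser dn for dp. -/
/-- `dm` is a distributed minimiser for `dp`: a monolithic minimiser which is a
product `⊗ᵢ dmᵢ` of component functions. -/
def IsDistributedMinimiser {n : ℕ} {I : Fin (n + 1) → Type*} {O : Type*}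
    (dp : (∀ i, I i) → O) (dm : (∀ i, I i) → ∀ i, I i) : Prop :=
  IsMinimiser dp dm ∧ ∃ dmi : ∀ i, I i → I i, dm = fun u i => dmi i (u i)

lemma dp_congr_aux {n : ℕ} {I : Fin (n + 1) → Type*} {O : Type*}
    (dp : (∀ i, I i) → O) (u v : ∀ i, I i)
    (h : ∀ i (w : ∀ j, I j),
      dp (Function.update w i (u i)) = dp (Function.update w i (v i))) :
    dp u = dp v := by
  classical
  have key : ∀ s : Finset (Fin (n + 1)),
      dp (fun i => if i ∈ s then v i else u i) = dp u := by
    intro s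
    induction s using Finset.induction with
    | empty => simp
    | @insert a s ha ih =>
      have h1 : (fun i => if i ∈ insert a s then v i else u i)
          = Function.update (fun i => if i ∈ s then v i else u i) a (v a) := by
        funext i
        by_cases hi : i = a
        · subst hi; simp
        · simp [Function.update_of_ne hi, hi]
      have h2 : (fun i => if i ∈ s then v i else u i)
          = Function.update (fun i => if i ∈ s then v i else u i) a (u a) := by
        funext i
        by_cases hi : i = a
        · subst hi; simp [ha]
        · simp [Function.update_of_ne hi]
      rw [h1, ← h a, ← h2, ih]
  have := key Finset.univ
  simpa using this.symm

/-- every distributed program `dp` has a best distributed minimiser. -/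
theorem exists_best_distributed_minimiser {n : ℕ} {I : Fin (n + 1) → Type*} {O : Type*}
    (dp : (∀ i, I i) → O) :
    ∃ dm : (∀ i, I i) → ∀ i, I i, IsDistributedMinimiser dp dm ∧
      ∀ dn : (∀ i, I i) → ∀ i, I i, IsDistributedMinimiser dp dn → Discloses dm dn := by
  classical
  set r : ∀ i, I i → I i → Prop := fun i x y =>
    ∀ w : ∀ j, I j, dp (Function.update w i x) = dp (Function.update w i y) with hr
  have hequiv : ∀ i, Equivalence (r i) := fun i =>
    ⟨fun x w => rfl, fun h w => (h w).symm, fun h1 h2 w => (h1 w).trans (h2 w)⟩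
  let s : ∀ i, Setoid (I i) := fun i => ⟨r i, hequiv i⟩
  let dmi : ∀ i, I i → I i := fun i x => (@Quotient.mk _ (s i) x).out
  have hrel : ∀ i x, r i (dmi i x) x := fun i x =>
    @Quotient.mk_out _ (s i) x
  have hsound : ∀ i (x y : I i), r i x y → dmi i x = dmi i y := by
    intro i x y hxy
    have : (@Quotient.mk _ (s i) x) = (@Quotient.mk _ (s i) y) := Quotient.sound hxy
    simp only [dmi, this]
  refine ⟨fun u i => dmi i (u i), ⟨⟨?_, ?_⟩, ⟨dmi, rfl⟩⟩, ?_⟩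
  · funext u
    exact dp_congr_aux dp _ u (fun i w => hrel i (u i) w)
  · funext u
    funext i
    have : r i (dmi i (u i)) (u i) := hrel i (u i)
    exact hsound i _ _ this
  · rintro dn ⟨⟨hpdn, _⟩, dni, rfl⟩ u v hv
    -- hv : v ∈ Know dn u, i.e. dn v = dn u
    have hcomp : ∀ i, dni i (v i) = dni i (u i) := fun i => congrFun hv i
    have hri : ∀ i, r i (v i) (u i) := by
      intro i w
      have e1 : dp (Function.update w i (v i))
          = dp (fun j => dni j (Function.update w i (v i) j)) :=
        (congrFun hpdn (Function.update w i (v i))).symm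
      have e2 : dp (Function.update w i (u i))
          = dp (fun j => dni j (Function.update w i (u i) j)) :=
        (congrFun hpdn (Function.update w i (u i))).symm
      have e3 : (fun j => dni j (Function.update w i (v i) j))
          = (fun j => dni j (Function.update w i (u i) j)) := by
        funext j
        by_cases hj : j = i
        · subst hj; simp [hcomp j]
        · simp [Function.update_of_ne hj]
      rw [e1, e3, ← e2]
    show (fun j => dmi j (v j)) = fun j => dmi j (u j)
    funext j
    exact hsound j _ _ (hri j)
end

section
/- The join of two box-product equivalence relations in the lattice of equivalence relations on a product is the box product of the componentwise joins: (⊠ᵢ R_i) ∨ (⊠ᵢ S_i) = ⊠ᵢ (R_i ∨ S_i), where ∨ denotes the join (transitive closure of union) in the respective lattices of equivalence relations, for equivalence relations R_i, S_i on D_i, i ∈ {0,…,n}. -/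
/-! The inclusion `⊠ᵢ (Rᵢ ⊔ Sᵢ) ≤ ⊠ᵢ Rᵢ ⊔ ⊠ᵢ Sᵢ` is the only nontrivial one. Fixing all
coordinates of a point but the `i`-th, the pullback of `⊠ᵢ Rᵢ ⊔ ⊠ᵢ Sᵢ` to `Dᵢ` is an
equivalence relation containing `Rᵢ` and `Sᵢ`, hence `Rᵢ ⊔ Sᵢ`. So a pair related by
`⊠ᵢ (Rᵢ ⊔ Sᵢ)` can be joined in `⊠ᵢ Rᵢ ⊔ ⊠ᵢ Sᵢ` by changing one coordinate at a time,
which takes finitely many steps because the index set is finite. -/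

def boxProd {n : ℕ} {D : Fin (n + 1) → Type*} (R : ∀ i, Setoid (D i)) :
    Setoid (∀ i, D i) where
  r u v := ∀ i, R i (u i) (v i)
  iseqv := ⟨fun u i => (R i).refl (u i), fun h i => (R i).symm (h i),
    fun h h' i => (R i).trans (h i) (h' i)⟩

open Function

namespace Setoid

variable {ι : Type*} [DecidableEq ι] {D : ι → Type*} {T : Setoid (∀ i, D i)}
  {P : ∀ i, Setoid (D i)}

theorem rel_of_forall_rel_of_eq_off_finset (hP : ∀ x i, P i ≤ T.comap (update x i))
    (s : Finset ι) {u v : ∀ i, D i} (huv : ∀ i, P i (u i) (v i))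
    (hs : ∀ i ∉ s, u i = v i) : T u v := by
  induction s using Finset.induction_on generalizing u with
  | empty => exact funext (fun i => hs i (Finset.notMem_empty i)) ▸ T.refl u
  | insert i s _ ih =>
    have hstep : T u (update u i (v i)) := by
      simpa only [comap_rel, update_eq_self] using hP u i (huv i)
    refine T.trans hstep (ih (fun j => ?_) fun j hj => ?_)
    · rcases eq_or_ne j i with rfl | hji
      · simp
      · simpa [hji] using huv j
    · rcases eq_or_ne j i with rfl | hji
      · simp
      · simpa [hji] using hs j (by simp [hji, hj])

theorem rel_of_forall_rel [Fintype ι] (hP : ∀ x i, P i ≤ T.comap (update x i))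
    {u v : ∀ i, D i} (huv : ∀ i, P i (u i) (v i)) : T u v :=
  rel_of_forall_rel_of_eq_off_finset hP Finset.univ huv fun i hi => absurd (Finset.mem_univ i) hi

end Setoid

section boxProd

variable {n : ℕ} {D : Fin (n + 1) → Type*}

theorem boxProd_mono {R S : ∀ i, Setoid (D i)} (h : ∀ i, R i ≤ S i) :
    boxProd R ≤ boxProd S :=
  fun _ _ huv i => h i (huv i)

theorem le_comap_update_of_boxProd_le {R : ∀ i, Setoid (D i)} {T : Setoid (∀ i, D i)}
    (h : boxProd R ≤ T) (x : ∀ i, D i) (i : Fin (n + 1)) : R i ≤ T.comap (update x i) := by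
  intro a b hab
  refine h fun j => ?_
  rcases eq_or_ne j i with rfl | hji
  · simpa using hab
  · simp [hji]

end boxProd

/-- the join (in the lattice of equivalence relations, i.e. transitive
closure of union) of two box products is the box product of the componentwise joins. -/
theorem boxProd_sup {n : ℕ} {D : Fin (n + 1) → Type*}
    (R S : ∀ i, Setoid (D i)) :
    boxProd R ⊔ boxProd S = boxProd (fun i => R i ⊔ S i) := by
  refine le_antisymm
    (sup_le (boxProd_mono fun _ => le_sup_left) (boxProd_mono fun _ => le_sup_right)) ?_
  intro u v huv
  refine Setoid.rel_of_forall_rel (fun x i => sup_le ?_ ?_) huv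
  · exact le_comap_update_of_boxProd_le le_sup_left x i
  · exact le_comap_update_of_boxProd_le le_sup_right x i
end

section
/- For a program dp : (∏ᵢ I_i) → O, let K be the join, in the lattice of equivalence relations on ∏ᵢ I_i, of all box-product equivalence relations contained in ker(dp). Then K is itself a box product ⊠ᵢ K_i for some equivalence relations K_i on I_i, and K ⊆ ker(dp). -/
section aux

variable {n : ℕ} {I : Fin (n + 1) → Type*} {O : Type*} (dp : (∀ i, I i) → O)

/-- The componentwise join of all box products below `ker dp`. -/
noncomputable def Kfam : ∀ i, Setoid (I i) := fun i =>
  sSup {S : Setoid (I i) | ∃ R : ∀ j, Setoid (I j),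
    boxProd R ≤ Setoid.ker dp ∧ S = R i}

lemma step_lemma (j : Fin (n + 1)) {a b : I j} (hab : Kfam dp j a b) :
    ∀ w : ∀ i, I i, dp (Function.update w j a) = dp (Function.update w j b) := by
  have hab' : Relation.EqvGen (fun x y => ∃ r ∈ {S : Setoid (I j) |
      ∃ R : ∀ k, Setoid (I k), boxProd R ≤ Setoid.ker dp ∧ S = R j}, r x y) a b := by
    have := hab
    rw [Kfam, Setoid.sSup_eq_eqvGen] at this
    exact this
  clear hab
  induction hab' with
  | rel x y hxy =>
    obtain ⟨r, ⟨R, hR, rfl⟩, hxy⟩ := hxy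
    intro w
    apply hR
    intro i
    by_cases hi : i = j
    · subst hi; simpa using hxy
    · simp only [Function.update_of_ne hi]
      exact (R i).refl _
  | refl x => intro w; rfl
  | symm x y _ ih => intro w; exact (ih w).symm
  | trans x y z _ _ ih1 ih2 => intro w; exact (ih1 w).trans (ih2 w)

lemma box_Kfam_le_ker : boxProd (Kfam dp) ≤ Setoid.ker dp := by
  rw [Setoid.le_def]
  intro u v huv
  have key : ∀ m : ℕ, m ≤ n + 1 →
      dp u = dp (fun i : Fin (n + 1) => if (i : ℕ) < m then v i else u i) := by
    intro m
    induction m with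
    | zero => intro _; congr 1
    | succ m ih =>
      intro hm
      have hm' : m < n + 1 := hm
      set j : Fin (n + 1) := ⟨m, hm'⟩ with hj
      set w : ∀ i, I i := fun i : Fin (n + 1) => if (i : ℕ) < m then v i else u i with hw
      have e1 : w = Function.update w j (u j) := by
        funext i
        by_cases hi : i = j
        · subst hi; simp [hw, hj]
        · rw [Function.update_of_ne hi]
      have e2 : (fun i : Fin (n + 1) => if (i : ℕ) < m + 1 then v i else u i) =
          Function.update w j (v j) := by
        funext i
        by_cases hi : i = j
        · subst hi; simp [hw, hj]
        · rw [Function.update_of_ne hi]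
          have hij : (i : ℕ) ≠ m := fun h => hi (Fin.ext (h.trans rfl))
          rcases Nat.lt_or_ge (i : ℕ) m with h | h
          · simp [hw, h, Nat.lt_succ_of_lt h]
          · have h2 : ¬ (i : ℕ) < m + 1 := by omega
            simp [hw, Nat.not_lt.mpr h, h2]
      calc dp u = dp w := ih (Nat.le_of_succ_le hm)
        _ = dp (Function.update w j (u j)) := by rw [← e1]
        _ = dp (Function.update w j (v j)) := step_lemma dp j (huv j) w
        _ = _ := by rw [← e2]
  have h := key (n + 1) le_rfl
  show dp u = dp v
  rw [h]
  congr 1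
  funext i
  simp [i.is_lt]

end aux

/-- for a program `dp` on a product domain, the join `K` of all
box-product equivalence relations contained in `ker dp` is itself a box product, and
`K ≤ ker dp`. -/
theorem sSup_boxProd_le_ker {n : ℕ} {I : Fin (n + 1) → Type*} {O : Type*}
    (dp : (∀ i, I i) → O) :
    ∃ K : Setoid (∀ i, I i),
      K = sSup {T : Setoid (∀ i, I i) |
            (∃ R : ∀ i, Setoid (I i), T = boxProd R) ∧ T ≤ Setoid.ker dp} ∧
      (∃ Ki : ∀ i, Setoid (I i), K = boxProd Ki) ∧
      K ≤ Setoid.ker dp := by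
  refine ⟨boxProd (Kfam dp), ?_, ⟨Kfam dp, rfl⟩, box_Kfam_le_ker dp⟩
  apply le_antisymm
  · exact le_sSup ⟨⟨Kfam dp, rfl⟩, box_Kfam_le_ker dp⟩
  · apply sSup_le
    rintro T ⟨⟨R, rfl⟩, hT⟩
    rw [Setoid.le_def]
    intro u v huv i
    exact Setoid.le_def.mp (le_sSup ⟨R, hT, rfl⟩ : R i ≤ Kfam dp i) (huv i)
end

section
/- For the Boolean OR program or : Bool × Bool → Bool, the function m : Bool × Bool → Bool × Bool that maps (false,false) to itself and every other pair to (true,true) is a best monolithic minimiser for or, while the identity function on Bool × Bool is a best distributed minimiser for or; in particular the best distributed minimiser reveals strictly more information (in the disclosure ordering) than the best monolithic minimiser. -/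
/-- A distributed minimiser on a binary product domain: a monolithic minimiser of the
form `m₁ ⊗ m₂` acting componentwise. -/
def IsDistributedMinimiser2 {A B O : Type*} (p : A × B → O) (dm : A × B → A × B) : Prop :=
  IsMinimiser p dm ∧ ∃ (m₁ : A → A) (m₂ : B → B), dm = fun x => (m₁ x.1, m₂ x.2)

/-- A distributed minimiser on a binary product domain is best iff it is `⊑`-below
every distributed minimiser. -/
def IsBestDistributedMinimiser2 {A B O : Type*} (p : A × B → O) (dm : A × B → A × B) : Prop :=
  IsDistributedMinimiser2 p dm ∧
    ∀ dn : A × B → A × B, IsDistributedMinimiser2 p dn → Discloses dm dn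

/-- The Boolean OR program. -/
def orP : Bool × Bool → Bool := fun x => x.1 || x.2

/-- The map sending `(false, false)` to itself and every other pair to `(true, true)`. -/
def mOr : Bool × Bool → Bool × Bool :=
  fun x => if x = (false, false) then (false, false) else (true, true)

lemma mOr_eq_iff (v u : Bool × Bool) : mOr v = mOr u ↔ orP v = orP u := by
  rcases v with ⟨a, b⟩; rcases u with ⟨c, d⟩
  cases a <;> cases b <;> cases c <;> cases d <;> simp [mOr, orP]

/-- `mOr` is a best monolithic minimiser for Boolean OR, the identity is
a best distributed minimiser for Boolean OR, and the best distributed minimiser reveals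
strictly more information than the best monolithic minimiser. -/
theorem or_best_minimisers :
    IsBestMinimiser orP mOr ∧
    IsBestDistributedMinimiser2 orP (id : Bool × Bool → Bool × Bool) ∧
    (Discloses mOr (id : Bool × Bool → Bool × Bool) ∧
      ¬ Discloses (id : Bool × Bool → Bool × Bool) mOr) := by
  refine ⟨⟨⟨?_, ?_⟩, ?_⟩, ⟨⟨⟨rfl, rfl⟩, id, id, rfl⟩, ?_⟩, ?_, ?_⟩
  · funext x; rcases x with ⟨a, b⟩; cases a <;> cases b <;> rfl
  · funext x; rcases x with ⟨a, b⟩; cases a <;> cases b <;> rfl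
  · rintro n ⟨hp, -⟩ u v (hv : n v = n u)
    show mOr v = mOr u
    rw [mOr_eq_iff]
    calc orP v = orP (n v) := (congrFun hp v).symm
      _ = orP (n u) := by rw [hv]
      _ = orP u := congrFun hp u
  · rintro dn ⟨⟨hp, -⟩, m₁, m₂, rfl⟩ u v (hv : _ = _)
    have h1 : m₁ false = false ∧ m₂ false = false := by
      have := congrFun hp (false, false)
      simp only [orP, Function.comp] at this
      exact Bool.or_eq_false_iff.mp this
    have h2 : m₁ true = true := by
      have := congrFun hp (true, false)
      simp only [orP, Function.comp, h1.2] at this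
      simpa using this
    have h3 : m₂ true = true := by
      have := congrFun hp (false, true)
      simp only [orP, Function.comp, h1.1] at this
      simpa using this
    have hid : ∀ x : Bool × Bool, (m₁ x.1, m₂ x.2) = x := by
      rintro ⟨a, b⟩; cases a <;> cases b <;> simp [h1.1, h1.2, h2, h3]
    show v = u
    rw [← hid v, ← hid u]; exact hv
  · rintro u v (hv : v = u); show mOr v = mOr u; rw [hv]
  · intro h
    have := h (true, false) (show mOr (false, true) = mOr (true, false) by rfl)
    simp [Know] at this
end
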